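/- The mapping ε ↦ g_ε(P,W)/ε is non-increasing on (0, I(X;Y)], where g_ε(P,W) := sup{ I(Y;Z) : X → Y → Z, I(X;Z) = ε } is the rate-privacy function. -/
import Mathlib


open Real

/-- Mutual information (in bits) of a joint pmf on finite alphabets. -/
noncomputable def miOf {α γ : Type} [Fintype α] [Fintype γ] (q : α → γ → ℝ) : ℝ :=
  ∑ x : α, ∑ z : γ,
    q x z * Real.logb 2 (q x z / ((∑ z' : γ, q x z') * (∑ x' : α, q x' z)))

/-- The rate-privacy function g_ε(P,W): the supremum of I(Y;Z) over all finite-output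
privacy filters P_{Z|Y} forming the Markov chain X → Y → Z with I(X;Z) = ε, for a
joint pmf p of (X,Y). -/
noncomputable def gRP {α β : Type} [Fintype α] [Fintype β] (p : α → β → ℝ) (ε : ℝ) : ℝ :=
  sSup {r : ℝ | ∃ (n : ℕ) (Q : β → Fin n → ℝ),
    (∀ y z, 0 ≤ Q y z) ∧ (∀ y, ∑ z, Q y z = 1) ∧
    miOf (fun x z => ∑ y : β, p x y * Q y z) = ε ∧
    r = miOf (fun y z => (∑ x : α, p x y) * Q y z)}

lemma miOf_reindex {α β γ : Type} [Fintype α] [Fintype β] [Fintype γ]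
    (q : α → β → ℝ) (e : γ ≃ β) :
    miOf (fun x i => q x (e i)) = miOf q := by
  unfold miOf
  have hrow : ∀ x, (∑ i : γ, q x (e i)) = ∑ z : β, q x z := fun x => e.sum_comp (q x)
  refine Finset.sum_congr rfl fun x _ => ?_
  rw [← e.sum_comp (fun z => q x z * Real.logb 2 (q x z / ((∑ z' : β, q x z') * (∑ x' : α, q x' z))))]
  exact Finset.sum_congr rfl fun i _ => by rw [hrow]

/-- Extending a joint pmf by an erasure symbol (time-sharing with weight `lam`)
scales mutual information by `lam`. -/
lemma miOf_extend {α : Type} [Fintype α] {n : ℕ} (r : α → ℝ) (q : α → Fin n → ℝ)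
    (hr1 : ∑ x, r x = 1) (hq0 : ∀ x i, 0 ≤ q x i) (hrow : ∀ x, ∑ i, q x i = r x)
    (lam : ℝ) (hl0 : 0 ≤ lam) (hl1 : lam ≤ 1) :
    miOf (fun x => Fin.cons ((1 - lam) * r x) (fun i => lam * q x i)) = lam * miOf q := by
  classical
  have hrow' : ∀ x, (∑ z : Fin (n+1), (Fin.cons ((1 - lam) * r x) (fun i => lam * q x i) : Fin (n+1) → ℝ) z) = r x := by
    intro x
    rw [Fin.sum_cons, ← Finset.mul_sum, hrow x]; ring
  have hcol0 : (∑ x' : α, (Fin.cons ((1 - lam) * r x') (fun i => lam * q x' i) : Fin (n+1) → ℝ) 0) = 1 - lam := by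
    simp only [Fin.cons_zero]
    rw [← Finset.mul_sum, hr1, mul_one]
  have hcols : ∀ i : Fin n, (∑ x' : α, (Fin.cons ((1 - lam) * r x') (fun i => lam * q x' i) : Fin (n+1) → ℝ) i.succ) = lam * ∑ x', q x' i := by
    intro i; simp only [Fin.cons_succ]; rw [← Finset.mul_sum]
  unfold miOf
  rw [Finset.mul_sum]
  refine Finset.sum_congr rfl fun x _ => ?_
  rw [Fin.sum_univ_succ]
  have hz : (Fin.cons ((1 - lam) * r x) (fun i => lam * q x i) : Fin (n+1) → ℝ) 0 *
      Real.logb 2 ((Fin.cons ((1 - lam) * r x) (fun i => lam * q x i) : Fin (n+1) → ℝ) 0 /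
        ((∑ z' : Fin (n+1), (Fin.cons ((1 - lam) * r x) (fun i => lam * q x i) : Fin (n+1) → ℝ) z') *
         (∑ x' : α, (Fin.cons ((1 - lam) * r x') (fun i => lam * q x' i) : Fin (n+1) → ℝ) 0))) = 0 := by
    rw [hrow' x, hcol0, Fin.cons_zero]
    rcases eq_or_ne (r x) 0 with h | h
    · simp [h]
    rcases eq_or_ne lam 1 with h' | h'
    · simp [h']
    have h1l : (1 : ℝ) - lam ≠ 0 := sub_ne_zero.mpr (Ne.symm h')
    have : (1 - lam) * r x / (r x * (1 - lam)) = 1 := by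
      field_simp
    rw [this, Real.logb_one, mul_zero]
  rw [hz, zero_add, Finset.mul_sum]
  refine Finset.sum_congr rfl fun i _ => ?_
  rw [hrow' x, hcols i]
  simp only [Fin.cons_succ]
  have hrq : (∑ i' : Fin n, q x i') = r x := hrow x
  rw [hrq]
  rcases eq_or_ne lam 0 with h0 | h0
  · simp [h0]
  rw [show r x * (lam * ∑ x', q x' i) = lam * (r x * ∑ x', q x' i) by ring,
    mul_div_mul_left _ _ h0]
  ring

/-- The output mutual information of any filter is bounded by the entropy of Y. -/
lemma miOf_y_le {α β : Type} [Fintype α] [Fintype β] (p : α → β → ℝ)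
    (hp0 : ∀ x y, 0 ≤ p x y) {n : ℕ} (Q : β → Fin n → ℝ)
    (hQ0 : ∀ y z, 0 ≤ Q y z) (hQ1 : ∀ y, ∑ z, Q y z = 1) :
    miOf (fun y z => (∑ x : α, p x y) * Q y z) ≤
      ∑ y : β, (∑ x : α, p x y) * Real.logb 2 (∑ x : α, p x y)⁻¹ := by
  unfold miOf
  refine Finset.sum_le_sum fun y _ => ?_
  set w : ℝ := ∑ x : α, p x y with hw
  have hw0 : 0 ≤ w := Finset.sum_nonneg fun x _ => hp0 x y
  have hrow : (∑ z' : Fin n, w * Q y z') = w := by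
    rw [← Finset.mul_sum, hQ1, mul_one]
  calc (∑ z : Fin n, w * Q y z * Real.logb 2 (w * Q y z /
          ((∑ z' : Fin n, w * Q y z') * (∑ y' : β, (∑ x : α, p x y') * Q y' z))))
      ≤ ∑ z : Fin n, w * Q y z * Real.logb 2 w⁻¹ := by
        refine Finset.sum_le_sum fun z _ => ?_
        set c : ℝ := ∑ y' : β, (∑ x : α, p x y') * Q y' z with hc
        rw [hrow]
        have hct : w * Q y z ≤ c := by
          refine Finset.single_le_sum (f := fun y' => (∑ x : α, p x y') * Q y' z) ?_ (Finset.mem_univ y)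
          intro y' _
          exact mul_nonneg (Finset.sum_nonneg fun x _ => hp0 x y') (hQ0 y' z)
        rcases eq_or_lt_of_le (mul_nonneg hw0 (hQ0 y z)) with h0 | h0
        · rw [← h0]; simp
        have hwpos : 0 < w := by
          rcases hw0.lt_or_eq with h | h
          · exact h
          · exfalso; rw [← h] at h0; simp at h0
        have hcpos : 0 < c := lt_of_lt_of_le h0 hct
        refine mul_le_mul_of_nonneg_left ?_ h0.le
        refine Real.logb_le_logb_of_le (by norm_num) (div_pos h0 (mul_pos hwpos hcpos)) ?_
        have h1 : w * Q y z / (w * c) ≤ w * Q y z / (w * (w * Q y z)) :=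
          div_le_div_of_nonneg_left h0.le (mul_pos hwpos h0)
            (mul_le_mul_of_nonneg_left hct hwpos.le)
        refine h1.trans ?_
        rw [show w * (w * Q y z) = w * Q y z * w by ring,
          div_mul_eq_div_div, div_self h0.ne', one_div]
      _ = w * Real.logb 2 w⁻¹ := by
        rw [← Finset.sum_mul, ← Finset.mul_sum, hQ1, mul_one]

/-- Time-sharing a filter with an erasure symbol. -/
lemma timeshare {α β : Type} [Fintype α] [Fintype β] (p : α → β → ℝ)
    (hp0 : ∀ x y, 0 ≤ p x y) (hp1 : ∑ x : α, ∑ y : β, p x y = 1)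
    {n : ℕ} (Q : β → Fin n → ℝ)
    (hQ0 : ∀ y z, 0 ≤ Q y z) (hQ1 : ∀ y, ∑ z, Q y z = 1)
    (lam : ℝ) (hl0 : 0 ≤ lam) (hl1 : lam ≤ 1) :
    ∃ (m : ℕ) (Q' : β → Fin m → ℝ), (∀ y z, 0 ≤ Q' y z) ∧ (∀ y, ∑ z, Q' y z = 1) ∧
      miOf (fun x z => ∑ y : β, p x y * Q' y z) = lam * miOf (fun x z => ∑ y : β, p x y * Q y z) ∧
      miOf (fun y z => (∑ x : α, p x y) * Q' y z) = lam * miOf (fun y z => (∑ x : α, p x y) * Q y z) := by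
  classical
  refine ⟨n + 1, fun y => (Fin.cons (1 - lam) (fun i => lam * Q y i) : Fin (n+1) → ℝ), ?_, ?_, ?_, ?_⟩
  · intro y z
    refine Fin.cases ?_ ?_ z
    · simpa using sub_nonneg.mpr hl1
    · intro i; simpa using mul_nonneg hl0 (hQ0 y i)
  · intro y
    rw [Fin.sum_cons, ← Finset.mul_sum, hQ1]; ring
  · have hrowX : ∀ x, (∑ i : Fin n, ∑ y : β, p x y * Q y i) = ∑ y : β, p x y := by
      intro x
      rw [Finset.sum_comm]
      exact Finset.sum_congr rfl fun y _ => by rw [← Finset.mul_sum, hQ1, mul_one]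
    have he : (fun x z => ∑ y : β, p x y * (Fin.cons (1 - lam) (fun i => lam * Q y i) : Fin (n+1) → ℝ) z)
        = fun x => (Fin.cons ((1 - lam) * (∑ y : β, p x y)) (fun i => lam * ∑ y : β, p x y * Q y i) : Fin (n+1) → ℝ) := by
      funext x z
      refine Fin.cases ?_ ?_ z
      · simp only [Fin.cons_zero, Finset.mul_sum]
        exact Finset.sum_congr rfl fun y _ => by ring
      · intro i
        simp only [Fin.cons_succ, Finset.mul_sum]
        exact Finset.sum_congr rfl fun y _ => by ring
    rw [he, miOf_extend (fun x => ∑ y : β, p x y) (fun x i => ∑ y : β, p x y * Q y i) hp1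
      (fun x i => Finset.sum_nonneg fun y _ => mul_nonneg (hp0 x y) (hQ0 y i))
      hrowX lam hl0 hl1]
  · have he : (fun y z => (∑ x : α, p x y) * (Fin.cons (1 - lam) (fun i => lam * Q y i) : Fin (n+1) → ℝ) z)
        = fun y => (Fin.cons ((1 - lam) * (∑ x : α, p x y)) (fun i => lam * ((∑ x : α, p x y) * Q y i)) : Fin (n+1) → ℝ) := by
      funext y z
      refine Fin.cases ?_ ?_ z
      · simp only [Fin.cons_zero]; ring
      · intro i; simp only [Fin.cons_succ]; ring
    rw [he, miOf_extend (fun y => ∑ x : α, p x y) (fun y i => (∑ x : α, p x y) * Q y i)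
      (by rw [Finset.sum_comm]; exact hp1)
      (fun y i => mul_nonneg (Finset.sum_nonneg fun x _ => hp0 x y) (hQ0 y i))
      (fun y => by rw [← Finset.mul_sum, hQ1, mul_one]) lam hl0 hl1]

/-- The identity filter: I(X;Z) = I(X;Y) and I(Y;Z) ≥ 0. -/
lemma identity_filter {α β : Type} [Fintype α] [Fintype β] (p : α → β → ℝ)
    (hp0 : ∀ x y, 0 ≤ p x y) (hp1 : ∑ x : α, ∑ y : β, p x y = 1) :
    ∃ (n : ℕ) (Q : β → Fin n → ℝ), (∀ y z, 0 ≤ Q y z) ∧ (∀ y, ∑ z, Q y z = 1) ∧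
      miOf (fun x z => ∑ y : β, p x y * Q y z) = miOf p ∧
      0 ≤ miOf (fun y z => (∑ x : α, p x y) * Q y z) := by
  classical
  obtain ⟨e⟩ : Nonempty (β ≃ Fin (Fintype.card β)) := ⟨Fintype.equivFin β⟩
  set pY : β → ℝ := fun y => ∑ x : α, p x y with hpY
  have hpY0 : ∀ y, 0 ≤ pY y := fun y => Finset.sum_nonneg fun x _ => hp0 x y
  have hpY1 : ∑ y, pY y = 1 := by rw [hpY]; rw [Finset.sum_comm]; exact hp1
  have hpYle : ∀ y, pY y ≤ 1 := by
    intro y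
    rw [← hpY1]
    exact Finset.single_le_sum (fun y' _ => hpY0 y') (Finset.mem_univ y)
  refine ⟨Fintype.card β, fun y i => if e y = i then 1 else 0, ?_, ?_, ?_, ?_⟩
  · intro y z; positivity
  · intro y; simp
  · have hj : (fun x z => ∑ y : β, p x y * (if e y = z then 1 else 0))
        = fun x z => p x (e.symm z) := by
      funext x z
      rw [Finset.sum_eq_single (e.symm z)]
      · simp
      · intro y _ hy
        have : e y ≠ z := fun h => hy (by rw [← h]; simp)
        simp [this]
      · simp
    rw [hj, miOf_reindex p e.symm]
  · unfold miOf
    refine Finset.sum_nonneg fun y _ => Finset.sum_nonneg fun z _ => ?_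
    rcases eq_or_ne (e y) z with hz | hz
    · rcases eq_or_lt_of_le (hpY0 y) with h0 | h0
      · have hy0 : (∑ x : α, p x y) = 0 := h0.symm
        simp [hy0]
      have hrow : (∑ z' : Fin (Fintype.card β), pY y * (if e y = z' then 1 else 0)) = pY y := by
        simp
      have hcol : (∑ y' : β, pY y' * (if e y' = z then 1 else 0)) = pY y := by
        rw [Finset.sum_eq_single y]
        · simp [hz]
        · intro y' _ hy'
          have : e y' ≠ z := by rw [← hz]; exact fun h => hy' (e.injective h)
          simp [this]
        · simp
      rw [hrow, hcol]
      simp only [if_pos hz, mul_one]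
      show 0 ≤ pY y * logb 2 (pY y / (pY y * pY y))
      refine mul_nonneg (hpY0 y) (Real.logb_nonneg (by norm_num) ?_)
      rw [le_div_iff₀ (by positivity), one_mul]
      nlinarith [hpYle y, h0]
    · simp [hz]

lemma gRP_bdd {α β : Type} [Fintype α] [Fintype β] (p : α → β → ℝ)
    (hp0 : ∀ x y, 0 ≤ p x y) (ε : ℝ) :
    BddAbove {r : ℝ | ∃ (n : ℕ) (Q : β → Fin n → ℝ),
      (∀ y z, 0 ≤ Q y z) ∧ (∀ y, ∑ z, Q y z = 1) ∧
      miOf (fun x z => ∑ y : β, p x y * Q y z) = ε ∧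
      r = miOf (fun y z => (∑ x : α, p x y) * Q y z)} := by
  refine ⟨∑ y : β, (∑ x : α, p x y) * Real.logb 2 (∑ x : α, p x y)⁻¹, ?_⟩
  rintro r ⟨n, Q, hQ0, hQ1, -, rfl⟩
  exact miOf_y_le p hp0 Q hQ0 hQ1

lemma gRP_nonneg {α β : Type} [Fintype α] [Fintype β] (p : α → β → ℝ)
    (hp0 : ∀ x y, 0 ≤ p x y) (hp1 : ∑ x : α, ∑ y : β, p x y = 1)
    (ε : ℝ) (hε0 : 0 < ε) (hεm : ε ≤ miOf p) : 0 ≤ gRP p ε := by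
  obtain ⟨n, Q, hQ0, hQ1, hmi, hval⟩ := identity_filter p hp0 hp1
  have hmp : 0 < miOf p := lt_of_lt_of_le hε0 hεm
  have hl0 : 0 ≤ ε / miOf p := le_of_lt (div_pos hε0 hmp)
  have hl1 : ε / miOf p ≤ 1 := (div_le_one hmp).mpr hεm
  obtain ⟨m, Q', h0', h1', hX', hY'⟩ := timeshare p hp0 hp1 Q hQ0 hQ1 (ε / miOf p) hl0 hl1
  have hmem : miOf (fun y z => (∑ x : α, p x y) * Q' y z) ∈
      {r : ℝ | ∃ (n : ℕ) (Q : β → Fin n → ℝ),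
        (∀ y z, 0 ≤ Q y z) ∧ (∀ y, ∑ z, Q y z = 1) ∧
        miOf (fun x z => ∑ y : β, p x y * Q y z) = ε ∧
        r = miOf (fun y z => (∑ x : α, p x y) * Q y z)} := by
    refine ⟨m, Q', h0', h1', ?_, rfl⟩
    rw [hX', hmi]
    exact div_mul_cancel₀ ε hmp.ne'
  have hge : 0 ≤ miOf (fun y z => (∑ x : α, p x y) * Q' y z) := by
    rw [hY']; exact mul_nonneg hl0 hval
  exact hge.trans (le_csSup (gRP_bdd p hp0 ε) hmem)

/-- ε ↦ g_ε(P,W)/ε is non-increasing on (0, I(X;Y)]. -/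
theorem stmt14 {α β : Type} [Fintype α] [Fintype β] (p : α → β → ℝ)
    (hp0 : ∀ x y, 0 ≤ p x y) (hp1 : ∑ x : α, ∑ y : β, p x y = 1) :
    ∀ ε₁ ε₂ : ℝ, 0 < ε₁ → ε₁ ≤ ε₂ → ε₂ ≤ miOf p →
      gRP p ε₂ / ε₂ ≤ gRP p ε₁ / ε₁ := by
  intro ε₁ ε₂ h1 h12 h2m
  have hε₂ : 0 < ε₂ := h1.trans_le h12
  have hg1 : 0 ≤ gRP p ε₁ := gRP_nonneg p hp0 hp1 ε₁ h1 (h12.trans h2m)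
  have key : gRP p ε₂ ≤ (ε₂ / ε₁) * gRP p ε₁ := by
    refine Real.sSup_le ?_ (mul_nonneg (by positivity) hg1)
    rintro r ⟨n, Q, hQ0, hQ1, hmi, rfl⟩
    have hl0 : 0 ≤ ε₁ / ε₂ := le_of_lt (div_pos h1 hε₂)
    have hl1 : ε₁ / ε₂ ≤ 1 := (div_le_one hε₂).mpr h12
    obtain ⟨m, Q', h0', h1', hX', hY'⟩ := timeshare p hp0 hp1 Q hQ0 hQ1 (ε₁ / ε₂) hl0 hl1
    have hmem : (ε₁ / ε₂) * miOf (fun y z => (∑ x : α, p x y) * Q y z) ∈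
        {r : ℝ | ∃ (n : ℕ) (Q : β → Fin n → ℝ),
          (∀ y z, 0 ≤ Q y z) ∧ (∀ y, ∑ z, Q y z = 1) ∧
          miOf (fun x z => ∑ y : β, p x y * Q y z) = ε₁ ∧
          r = miOf (fun y z => (∑ x : α, p x y) * Q y z)} := by
      refine ⟨m, Q', h0', h1', ?_, hY'.symm⟩
      rw [hX', hmi]
      exact div_mul_cancel₀ ε₁ hε₂.ne'
    have hle : (ε₁ / ε₂) * miOf (fun y z => (∑ x : α, p x y) * Q y z) ≤ gRP p ε₁ :=
      le_csSup (gRP_bdd p hp0 ε₁) hmem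
    calc miOf (fun y z => (∑ x : α, p x y) * Q y z)
        = (ε₂ / ε₁) * ((ε₁ / ε₂) * miOf (fun y z => (∑ x : α, p x y) * Q y z)) := by
          field_simp
      _ ≤ (ε₂ / ε₁) * gRP p ε₁ := mul_le_mul_of_nonneg_left hle (by positivity)
  rw [div_le_div_iff₀ hε₂ h1]
  calc gRP p ε₂ * ε₁ ≤ ((ε₂ / ε₁) * gRP p ε₁) * ε₁ := mul_le_mul_of_nonneg_right key h1.le
    _ = gRP p ε₁ * ε₂ := by field_simp
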